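/- Under the hypotheses of the abstract eigenvalue lemma (A_k continuous in k, self-adjoint positive definite; B self-adjoint, non-negative, compact), if λ₁ is the first Dirichlet eigenvalue of −Δ on D and A_{√λ₁} − λ₁ B is non-positive on the one-dimensional span of (v₁, 0), where v₁ is the first Dirichlet eigenfunction extended appropriately, while A₀ is positive definite, then the smallest k > 0 with A_k − k²B having non-trivial kernel satisfies k² ≤ λ₁. -/

import Mathlib

/-!
Let `m k` be the infimum of `re ⟪(A k - k² B) x, x⟫` over unit vectors `x`. The bottom of the
numerical range is `1`-Lipschitz in the operator norm, so `m` is continuous; it is positive at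
`k = 0` because `A 0` is coercive, and non-positive at `k = √λ₁` by testing on `x₀`. Hence `m`
vanishes at some `k ∈ (0, √λ₁]`. There `T = A k - k² B` is a positive operator, and along a
minimising unit sequence `uₙ` we get `‖T uₙ‖² ≤ ‖T‖ re ⟪T uₙ, uₙ⟫ → 0`. Compactness of `B` makes
`B uₙ` converge along a subsequence, hence so does `A k uₙ = T uₙ + k² B uₙ`, hence so does `uₙ`
because the coercive operator `A k` is invertible. The limit is a unit vector in the kernel of `T`.
-/

open Set Filter Topology

namespace ContinuousLinearMap

section RCLike

variable {𝕜 E : Type*} [RCLike 𝕜] [NormedAddCommGroup E] [InnerProductSpace 𝕜 E]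

instance [Nontrivial E] : Nonempty {x : E // x ≠ 0} := nonempty_subtype.2 (exists_ne 0)

noncomputable def rayleighInf (T : E →L[𝕜] E) : ℝ :=
  ⨅ x : {x : E // x ≠ 0}, T.rayleighQuotient x

theorem bddBelow_range_rayleighQuotient (T : E →L[𝕜] E) :
    BddBelow (range fun x : {x : E // x ≠ 0} ↦ T.rayleighQuotient x) :=
  ⟨-‖T‖, by
    rintro _ ⟨x, rfl⟩
    exact neg_le_of_abs_le (T.rayleighQuotient_le_norm x)⟩

theorem rayleighInf_le_rayleighQuotient (T : E →L[𝕜] E) {x : E} (hx : x ≠ 0) :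
    T.rayleighInf ≤ T.rayleighQuotient x :=
  ciInf_le T.bddBelow_range_rayleighQuotient ⟨x, hx⟩

theorem rayleighInf_mul_norm_sq_le (T : E →L[𝕜] E) (x : E) :
    T.rayleighInf * ‖x‖ ^ 2 ≤ T.reApplyInnerSelf x := by
  rcases eq_or_ne x 0 with rfl | hx
  · simp [reApplyInnerSelf_apply]
  · have hx2 : 0 < ‖x‖ ^ 2 := by positivity
    exact (le_div_iff₀ hx2).1 (T.rayleighInf_le_rayleighQuotient hx)

theorem le_rayleighInf [Nontrivial E] {T : E →L[𝕜] E} {c : ℝ}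
    (h : ∀ x, c * ‖x‖ ^ 2 ≤ T.reApplyInnerSelf x) : c ≤ T.rayleighInf :=
  le_ciInf fun x ↦ (le_div_iff₀ (by have := norm_pos_iff.2 x.2; positivity)).2 (h x)

theorem rayleighInf_le_add_norm_sub [Nontrivial E] (S T : E →L[𝕜] E) :
    S.rayleighInf ≤ T.rayleighInf + ‖S - T‖ := by
  suffices S.rayleighInf - ‖S - T‖ ≤ T.rayleighInf by linarith
  refine le_ciInf fun x ↦ ?_
  have hsplit := (S - T).rayleighQuotient_add T (x := x)
  rw [sub_add_cancel] at hsplit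
  have hST := (abs_le.1 ((S - T).rayleighQuotient_le_norm x)).2
  have hS := S.rayleighInf_le_rayleighQuotient x.2
  linarith

theorem lipschitzWith_rayleighInf [Nontrivial E] :
    LipschitzWith 1 (rayleighInf : (E →L[𝕜] E) → ℝ) :=
  LipschitzWith.of_le_add fun S T ↦ by
    simpa [dist_eq_norm] using rayleighInf_le_add_norm_sub S T

theorem isPositive_of_rayleighInf_nonneg {T : E →L[𝕜] E} (hT : T.IsSymmetric)
    (h : 0 ≤ T.rayleighInf) : T.IsPositive :=
  ⟨hT, fun x ↦ (mul_nonneg h (sq_nonneg ‖x‖)).trans (T.rayleighInf_mul_norm_sq_le x)⟩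

theorem exists_seq_norm_eq_one_tendsto_rayleighInf [Nontrivial E] (T : E →L[𝕜] E) :
    ∃ u : ℕ → E, (∀ n, ‖u n‖ = 1) ∧
      Tendsto (fun n ↦ T.reApplyInnerSelf (u n)) atTop (𝓝 T.rayleighInf) := by
  obtain ⟨v, -, hv, hmem⟩ := exists_seq_tendsto_sInf (range_nonempty _)
    T.bddBelow_range_rayleighQuotient
  choose x hx using hmem
  have hunit : ∀ n, ‖((‖(x n : E)‖ : 𝕜)⁻¹ • (x n : E))‖ = 1 := fun n ↦ norm_smul_inv_norm (x n).2
  refine ⟨fun n ↦ ((‖(x n : E)‖ : 𝕜))⁻¹ • (x n : E), hunit, hv.congr fun n ↦ ?_⟩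
  have hscale : ((‖(x n : E)‖ : 𝕜))⁻¹ ≠ 0 := inv_ne_zero (by simpa using (x n).2)
  rw [← hx n]
  change T.rayleighQuotient (x n) = _
  rw [← T.rayleigh_smul _ hscale, rayleighQuotient, hunit, one_pow, div_one]

theorem isUnit_of_coercive [CompleteSpace E] {T : E →L[𝕜] E} {c : ℝ} (hc : 0 < c)
    (h : ∀ x, c * ‖x‖ ^ 2 ≤ T.reApplyInnerSelf x) : IsUnit T :=
  isUnit_of_forall_le_norm_inner_map T (c := ⟨c, hc.le⟩) hc fun x ↦ by
    rw [mul_comm]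
    exact (h x).trans (RCLike.re_le_norm _)

end RCLike

variable {X : Type*} [NormedAddCommGroup X] [InnerProductSpace ℂ X] [CompleteSpace X]

theorem IsPositive.norm_apply_sq_le {T : X →L[ℂ] X} (hT : T.IsPositive) (x : X) :
    ‖T x‖ ^ 2 ≤ ‖T‖ * T.reApplyInnerSelf x := by
  have hT0 : 0 ≤ T := (nonneg_iff_isPositive T).2 hT
  set S := CFC.sqrt T
  have hS : star S = S := (CFC.sqrt_nonneg T).star_eq
  have hSS : S * S = T := CFC.sqrt_mul_sqrt_self T hT0
  have hsq : T * T ≤ ‖T‖ • T := by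
    calc T * T = star S * T * S := by rw [hS, ← hSS]; simp only [mul_assoc]
      _ ≤ ‖T‖ • (star S * S) := CStarAlgebra.star_left_conjugate_le_norm_smul
      _ = ‖T‖ • T := by rw [hS, hSS]
  have h := ((le_def _ _).1 hsq).re_inner_nonneg_left x
  rw [sub_apply, inner_sub_left, map_sub, mul_def, comp_apply, hT.isSymmetric.apply_clm,
    smul_apply, inner_smul_left_eq_smul, RCLike.smul_re, inner_self_eq_norm_sq] at h
  rw [reApplyInnerSelf_apply]
  linarith

theorem IsPositive.tendsto_apply_zero {T : X →L[ℂ] X} (hT : T.IsPositive) {u : ℕ → X}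
    (hu : Tendsto (fun n ↦ T.reApplyInnerSelf (u n)) atTop (𝓝 0)) :
    Tendsto (fun n ↦ T (u n)) atTop (𝓝 0) := by
  have hsq : Tendsto (fun n ↦ ‖T (u n)‖ ^ 2) atTop (𝓝 0) :=
    squeeze_zero (fun n ↦ sq_nonneg _) (fun n ↦ hT.norm_apply_sq_le (u n))
      (by simpa using hu.const_mul ‖T‖)
  rw [tendsto_zero_iff_norm_tendsto_zero]
  simpa [Real.sqrt_sq (norm_nonneg _)] using hsq.sqrt

theorem exists_ne_zero_apply_eq_zero_of_rayleighInf_eq_zero [Nontrivial X] {T K : X →L[ℂ] X}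
    (hT : IsSelfAdjoint T) (hT0 : T.rayleighInf = 0) (hK : IsCompactOperator K) {c : ℝ}
    (hc : 0 < c) (hcoer : ∀ x, c * ‖x‖ ^ 2 ≤ (T + K).reApplyInnerSelf x) :
    ∃ x ≠ 0, T x = 0 := by
  obtain ⟨u, hu, hTu⟩ := T.exists_seq_norm_eq_one_tendsto_rayleighInf
  rw [hT0] at hTu
  have hTu0 := (isPositive_of_rayleighInf_nonneg hT.isSymmetric hT0.ge).tendsto_apply_zero hTu
  obtain ⟨y, -, φ, hφ, hKu⟩ := (hK.isCompact_closure_image_closedBall 1).tendsto_subseq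
    fun n ↦ subset_closure (mem_image_of_mem K (mem_closedBall_zero_iff.2 (hu n).le))
  obtain ⟨U, hU⟩ := isUnit_of_coercive hc hcoer
  obtain ⟨x, hlim⟩ : ∃ x, Tendsto (u ∘ φ) atTop (𝓝 x) := by
    have hsum := (hTu0.comp hφ.tendsto_atTop).add hKu
    rw [zero_add] at hsum
    refine ⟨_, (((↑U⁻¹ : X →L[ℂ] X).continuous.tendsto y).comp hsum).congr fun n ↦ ?_⟩
    simp only [Function.comp_apply, ← add_apply, ← hU]
    exact DFunLike.congr_fun U.inv_mul (u (φ n))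
  have hx : ‖x‖ = 1 :=
    tendsto_nhds_unique hlim.norm (tendsto_const_nhds.congr fun n ↦ (hu (φ n)).symm)
  refine ⟨x, norm_ne_zero_iff.1 (by simp [hx]), ?_⟩
  exact tendsto_nhds_unique ((T.continuous.tendsto x).comp hlim) (hTu0.comp hφ.tendsto_atTop)

end ContinuousLinearMap

open ContinuousLinearMap in
theorem exists_mem_Ioc_sub_sq_smul_apply_eq_zero
    {X : Type*} [NormedAddCommGroup X] [InnerProductSpace ℂ X] [CompleteSpace X] [Nontrivial X]
    (A : ℝ → X →L[ℂ] X) (B : X →L[ℂ] X)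
    (hAcont : ContinuousOn A (Ici 0)) (hAsa : ∀ k ≥ (0 : ℝ), IsSelfAdjoint (A k))
    (hApos : ∀ k ≥ (0 : ℝ), ∃ c > (0 : ℝ), ∀ x : X, c * ‖x‖ ^ 2 ≤ (A k).reApplyInnerSelf x)
    (hBsa : IsSelfAdjoint B) (hBcompact : IsCompactOperator B)
    {s : ℝ} (hs : 0 ≤ s) (hneg : (A s - ((s : ℂ) ^ 2) • B).rayleighInf ≤ 0) :
    ∃ k ∈ Ioc 0 s, ∃ x : X, x ≠ 0 ∧ (A k - ((k : ℂ) ^ 2) • B) x = 0 := by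
  set m : ℝ → ℝ := fun k ↦ (A k - ((k : ℂ) ^ 2) • B).rayleighInf
  have hm : ContinuousOn m (Ici 0) :=
    lipschitzWith_rayleighInf.continuous.comp_continuousOn (hAcont.sub (by fun_prop))
  obtain ⟨c₀, hc₀, hcoer₀⟩ := hApos 0 le_rfl
  have hm0 : 0 < m 0 := hc₀.trans_le (le_rayleighInf (by simpa using hcoer₀))
  obtain ⟨k, hk, hmk⟩ := intermediate_value_Icc' hs (hm.mono Icc_subset_Ici_self) ⟨hneg, hm0.le⟩
  have hk0 : k ≠ 0 := by rintro rfl; exact hm0.ne' hmk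
  obtain ⟨c, hc, hcoer⟩ := hApos k hk.1
  have hksa : IsSelfAdjoint ((k : ℂ) ^ 2) :=
    (show IsSelfAdjoint (k : ℂ) from Complex.conj_ofReal k).pow 2
  refine ⟨k, ⟨hk.1.lt_of_ne' hk0, hk.2⟩, exists_ne_zero_apply_eq_zero_of_rayleighInf_eq_zero
    (K := ((k : ℂ) ^ 2) • B) ((hAsa k hk.1).sub (hksa.smul hBsa)) hmk
    (hBcompact.smul ((k : ℂ) ^ 2)) hc (by simpa using hcoer)⟩

theorem first_eigenvalue_upper_bound_general
    {X : Type*} [NormedAddCommGroup X] [InnerProductSpace ℂ X] [CompleteSpace X]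
    (A : ℝ → X →L[ℂ] X) (B : X →L[ℂ] X)
    (hAcont : ContinuousOn A (Ici (0 : ℝ)))
    (hAsa : ∀ k ≥ (0 : ℝ), IsSelfAdjoint (A k))
    (hApos : ∀ k ≥ (0 : ℝ), ∃ c > (0 : ℝ), ∀ x : X, c * ‖x‖ ^ 2 ≤ (inner ℂ (A k x) x : ℂ).re)
    (hBsa : IsSelfAdjoint B)
    (hBcompact : IsCompactOperator B)
    (lam1 : ℝ) (hlam1 : 0 < lam1)
    (x₀ : X) (hx₀ : x₀ ≠ 0)
    (h2 : ∀ x ∈ Submodule.span ℂ ({x₀} : Set X),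
      (inner ℂ ((A (Real.sqrt lam1) - (lam1 : ℂ) • B) x) x : ℂ).re ≤ 0) :
    (∃ k ∈ Ioc (0 : ℝ) (Real.sqrt lam1),
      ∃ x : X, x ≠ 0 ∧ (A k - ((k : ℂ) ^ 2) • B) x = 0)
    ∧ ∀ k₁ : ℝ,
        IsLeast {k : ℝ | 0 < k ∧ ∃ x : X, x ≠ 0 ∧ (A k - ((k : ℂ) ^ 2) • B) x = 0} k₁ →
        k₁ ^ 2 ≤ lam1 := by
  have : Nontrivial X := ⟨⟨x₀, 0, hx₀⟩⟩
  have hsq : ((Real.sqrt lam1 : ℂ)) ^ 2 = lam1 := by exact_mod_cast Real.sq_sqrt hlam1.le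
  have hneg : (A (Real.sqrt lam1) - ((Real.sqrt lam1 : ℂ) ^ 2) • B).rayleighInf ≤ 0 := by
    rw [hsq]
    refine nonpos_of_mul_nonpos_left ?_ (pow_pos (norm_pos_iff.2 hx₀) 2)
    exact ((A _ - _).rayleighInf_mul_norm_sq_le x₀).trans
      (h2 x₀ (Submodule.mem_span_singleton_self x₀))
  have hex := exists_mem_Ioc_sub_sq_smul_apply_eq_zero A B hAcont hAsa hApos hBsa hBcompact
    (Real.sqrt_nonneg lam1) hneg
  refine ⟨hex, fun k₁ hk₁ ↦ ?_⟩
  obtain ⟨k, hk, x, hx, hkx⟩ := hex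
  calc k₁ ^ 2 ≤ Real.sqrt lam1 ^ 2 :=
        pow_le_pow_left₀ hk₁.1.1.le ((hk₁.2 ⟨hk.1, x, hx, hkx⟩).trans hk.2) 2
    _ = lam1 := Real.sq_sqrt hlam1.le

/-- Under the hypotheses of the abstract eigenvalue lemma (continuity in `k`,
self-adjointness, positive definiteness of `A_k`; `B` self-adjoint non-negative compact),
if `A₀` is positive definite and `A_{√λ₁} − λ₁ B` is non-positive on the one-dimensional
span of a nonzero element `x₀` (built from the first Dirichlet eigenfunction of `−Δ` on `D`
with first Dirichlet eigenvalue `λ₁`), then there is an eigenvalue `k ∈ (0, √λ₁]`, and the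
smallest `k > 0` for which `A_k − k²B` has non-trivial kernel satisfies `k² ≤ λ₁`. -/
theorem first_eigenvalue_upper_bound
    {X : Type*} [NormedAddCommGroup X] [InnerProductSpace ℂ X] [CompleteSpace X]
    (A : ℝ → X →L[ℂ] X) (B : X →L[ℂ] X)
    (hAcont : ContinuousOn A (Ici (0 : ℝ)))
    (hAsa : ∀ k ≥ (0 : ℝ), IsSelfAdjoint (A k))
    (hApos : ∀ k ≥ (0 : ℝ), ∃ c > (0 : ℝ), ∀ x : X, c * ‖x‖ ^ 2 ≤ (inner ℂ (A k x) x : ℂ).re)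
    (hBsa : IsSelfAdjoint B)
    (hBnonneg : ∀ x : X, 0 ≤ (inner ℂ (B x) x : ℂ).re)
    (hBcompact : IsCompactOperator B)
    (lam1 : ℝ) (hlam1 : 0 < lam1)
    (x₀ : X) (hx₀ : x₀ ≠ 0)
    (h2 : ∀ x ∈ Submodule.span ℂ ({x₀} : Set X),
      (inner ℂ ((A (Real.sqrt lam1) - (lam1 : ℂ) • B) x) x : ℂ).re ≤ 0)
    (h1 : ∃ c > (0 : ℝ), ∀ x : X, c * ‖x‖ ^ 2 ≤ (inner ℂ (A 0 x) x : ℂ).re) :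
    (∃ k ∈ Ioc (0 : ℝ) (Real.sqrt lam1),
      ∃ x : X, x ≠ 0 ∧ (A k - ((k : ℂ) ^ 2) • B) x = 0)
    ∧ ∀ k₁ : ℝ,
        IsLeast {k : ℝ | 0 < k ∧ ∃ x : X, x ≠ 0 ∧ (A k - ((k : ℂ) ^ 2) • B) x = 0} k₁ →
        k₁ ^ 2 ≤ lam1 :=
  first_eigenvalue_upper_bound_general A B hAcont hAsa hApos hBsa hBcompact lam1 hlam1 x₀ hx₀ h2
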